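/- For λ > 0 and n ∈ ℕ, let C_n^{(λ)} be the Gegenbauer polynomial and for ℓ > 0 expand C_n^{(ℓ)} in terms of C^{(λ)}: C_n^{(ℓ)}(x) = Σ_{k=0}^{⌊n/2⌋} (-1)^k (Γ(ℓ+n-k) Γ(λ) / (k! Γ(ℓ))) Σ_{j=0}^{⌊(n-2k)/2⌋} (λ+n-2(k+j)) / (j! Γ(λ+n-2k+1-j)) · C^{(λ)}_{n-2(k+j)}(x), as an identity of polynomials. -/

import Mathlib

/-! Expanding each `(2x)^{n-2k}` in the explicit formula for `C_n^{(ℓ)}` by the monomial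
expansion in the `C^{(λ)}_m` gives the formula term by term, so everything rests on that
expansion. Substituting the explicit formula for each `C^{(λ)}_{m-2j}` and grouping terms by
`s = j + i`, the coefficient of `(2x)^{m-2s}` is `m!/(m-2s)!` times
`∑ᵢ (-1)^i (a+2i) Γ(a+i) / ((s-i)! i! Γ(a+s+1+i))` with `a = λ + m - 2s`. This sum telescopes:
with `vᵢ = (-1)^i i Γ(a+i) / (i! (s-i)! Γ(a+s+i))`, `s` times its `i`-th term is `vᵢ - vᵢ₊₁`
for `i < s` and `vₛ` for `i = s`, and `v₀ = 0`; so it vanishes for `s > 0` (and is `1` for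
`s = 0`). -/

/-- The Gegenbauer polynomial `C_n^{(l)}`, via its explicit formula. -/
noncomputable def gegenbauer (l : ℝ) (n : ℕ) (x : ℝ) : ℝ :=
  ∑ k ∈ Finset.range (n / 2 + 1),
    (-1 : ℝ) ^ k *
      (Real.Gamma (l + n - k) /
        ((k.factorial : ℝ) * ((n - 2 * k).factorial : ℝ) * Real.Gamma l)) *
      (2 * x) ^ (n - 2 * k)

open Finset Real Nat

lemma sum_triangle_eq_sum_antidiagonals {M : Type*} [AddCommMonoid M] (m : ℕ) (f : ℕ → ℕ → M) :
    ∑ j ∈ range (m / 2 + 1), ∑ i ∈ range ((m - 2 * j) / 2 + 1), f j i =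
      ∑ s ∈ range (m / 2 + 1), ∑ i ∈ range (s + 1), f (s - i) i := by
  rw [sum_sigma', sum_sigma']
  refine sum_nbij' (fun p => ⟨p.1 + p.2, p.2⟩) (fun p => ⟨p.1 - p.2, p.2⟩) ?_ ?_ ?_ ?_ ?_ <;>
    rintro ⟨j, i⟩ <;>
    simp only [mem_sigma, mem_range, Sigma.mk.injEq, heq_eq_eq, and_true, Nat.add_sub_cancel,
      implies_true] <;>
    intro h <;> omega

namespace Gegenbauer

noncomputable def inversionCoeff (a : ℝ) (s i : ℕ) : ℝ :=
  (-1) ^ i * (a + 2 * i) * Gamma (a + i) / ((s - i)! * i ! * Gamma (a + s + 1 + i))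

noncomputable def inversionCoeffPrimitive (a : ℝ) (s i : ℕ) : ℝ :=
  (-1) ^ i * i * Gamma (a + i) / (i ! * (s - i)! * Gamma (a + s + i))

variable {a : ℝ}

lemma mul_inversionCoeff_of_lt (ha : 0 < a) {s i : ℕ} (hi : i < s) :
    s * inversionCoeff a s i =
      inversionCoeffPrimitive a s i - inversionCoeffPrimitive a s (i + 1) := by
  obtain ⟨d, rfl⟩ : ∃ d, s = i + d + 1 := ⟨s - i - 1, by omega⟩
  have hai : 0 < a + i := by positivity
  have hasi : 0 < a + ↑(i + d + 1) + i := by positivity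
  have hΓ : Gamma (a + ↑(i + d + 1) + i) ≠ 0 := (Gamma_pos_of_pos hasi).ne'
  rw [inversionCoeff, inversionCoeffPrimitive, inversionCoeffPrimitive,
    show i + d + 1 - i = d + 1 by omega, show i + d + 1 - (i + 1) = d by omega,
    show a + ↑(i + d + 1) + 1 + i = (a + ↑(i + d + 1) + i) + 1 by ring,
    show a + ↑(i + d + 1) + ↑(i + 1) = (a + ↑(i + d + 1) + i) + 1 by push_cast; ring,
    show a + ↑(i + 1) = (a + i) + 1 by push_cast; ring,
    Gamma_add_one hasi.ne', Gamma_add_one hai.ne', factorial_succ, factorial_succ]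
  push_cast
  field_simp
  ring

lemma mul_inversionCoeff_self (ha : 0 < a) (s : ℕ) :
    s * inversionCoeff a s s = inversionCoeffPrimitive a s s := by
  have has : 0 < a + s + s := by positivity
  rw [inversionCoeff, inversionCoeffPrimitive, Nat.sub_self,
    show a + s + 1 + s = (a + s + s) + 1 by ring, Gamma_add_one has.ne']
  have hΓ : Gamma (a + s + s) ≠ 0 := (Gamma_pos_of_pos has).ne'
  field_simp
  ring

lemma sum_inversionCoeff (ha : 0 < a) (s : ℕ) :
    ∑ i ∈ range (s + 1), inversionCoeff a s i = if s = 0 then 1 else 0 := by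
  rcases Nat.eq_zero_or_pos s with rfl | hs
  · simp [inversionCoeff, Gamma_add_one ha.ne', (Gamma_pos_of_pos ha).ne', ha.ne']
  · have hs' : (s : ℝ) ≠ 0 := by positivity
    rw [if_neg hs.ne']
    refine mul_left_cancel₀ hs' ?_
    rw [mul_zero, mul_sum, sum_range_succ, mul_inversionCoeff_self ha,
      sum_congr rfl fun i hi => mul_inversionCoeff_of_lt ha (mem_range.mp hi), sum_range_sub']
    simp [inversionCoeffPrimitive]

variable {lam : ℝ}

/-- The `(j, i) = (s - i, i)` summand of `two_mul_pow_eq_sum_gegenbauer` once each `gegenbauer`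
is expanded, with `a = λ + m - 2s`. -/
lemma expansion_summand_eq_inversionCoeff_mul (hlam : 0 < lam) {m s i : ℕ} (hs : 2 * s ≤ m) (hi : i ≤ s) (x : ℝ) :
    Gamma lam * m ! * ((lam + m - 2 * (s - i : ℕ)) / ((s - i)! * Gamma (lam + m + 1 - (s - i : ℕ))) *
      ((-1) ^ i * (Gamma (lam + (m - 2 * (s - i) : ℕ) - i) /
        (i ! * (m - 2 * (s - i) - 2 * i)! * Gamma lam)) * (2 * x) ^ (m - 2 * (s - i) - 2 * i))) =
      inversionCoeff (lam + (m - 2 * s : ℕ)) s i * (m ! / (m - 2 * s)! * (2 * x) ^ (m - 2 * s)) := by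
  obtain ⟨j, rfl⟩ := Nat.exists_eq_add_of_le hi
  obtain ⟨r, rfl⟩ := Nat.exists_eq_add_of_le' hs
  have hΓ : Gamma lam ≠ 0 := (Gamma_pos_of_pos hlam).ne'
  rw [inversionCoeff, Nat.add_sub_cancel_left, Nat.add_sub_cancel,
    show r + 2 * (i + j) - 2 * j = r + 2 * i by omega, Nat.add_sub_cancel]
  push_cast
  rw [show lam + (r + 2 * (i + j) : ℝ) + 1 - j = lam + r + (i + j) + 1 + i by ring,
    show lam + (r + 2 * i : ℝ) - i = lam + r + i by ring]
  have hΓ' : Gamma (lam + r + (i + j) + 1 + i) ≠ 0 := (Gamma_pos_of_pos (by positivity)).ne'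
  field_simp
  ring

lemma two_mul_pow_eq_sum_gegenbauer (hlam : 0 < lam) (m : ℕ) (x : ℝ) :
    (2 * x) ^ m = Gamma lam * m ! * ∑ j ∈ range (m / 2 + 1),
      (lam + m - 2 * j) / (j ! * Gamma (lam + m + 1 - j)) * gegenbauer lam (m - 2 * j) x := by
  have hcoeff (s : ℕ) := sum_inversionCoeff (a := lam + (m - 2 * s : ℕ)) (by positivity) s
  calc (2 * x) ^ m
      = ∑ s ∈ range (m / 2 + 1), ∑ i ∈ range (s + 1),
          inversionCoeff (lam + (m - 2 * s : ℕ)) s i * (m ! / (m - 2 * s)! * (2 * x) ^ (m - 2 * s)) := by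
        simp only [← sum_mul, hcoeff, ite_mul, one_mul, zero_mul, sum_ite_eq', mem_range]
        simp [factorial_ne_zero]
    _ = _ := by
      simp only [gegenbauer, mul_sum]
      rw [sum_triangle_eq_sum_antidiagonals]
      exact sum_congr rfl fun s hs => sum_congr rfl fun i hi =>
        (expansion_summand_eq_inversionCoeff_mul hlam (by grind) (by grind) x).symm

end Gegenbauer

theorem gegenbauer_connection_formula_general (lam ell : ℝ) (hlam : 0 < lam)
    (n : ℕ) (x : ℝ) :
    gegenbauer ell n x =
      ∑ k ∈ Finset.range (n / 2 + 1),
        (-1 : ℝ) ^ k *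
          (Real.Gamma (ell + n - k) * Real.Gamma lam /
            ((k.factorial : ℝ) * Real.Gamma ell)) *
          ∑ j ∈ Finset.range ((n - 2 * k) / 2 + 1),
            (lam + n - 2 * (k + j)) /
                ((j.factorial : ℝ) * Real.Gamma (lam + n - 2 * k + 1 - j)) *
              gegenbauer lam (n - 2 * (k + j)) x := by
  rw [gegenbauer]
  refine sum_congr rfl fun k hk => ?_
  have hm : ((n - 2 * k : ℕ) : ℝ) = n - 2 * k := by push_cast [show 2 * k ≤ n by grind]; ring
  rw [Gegenbauer.two_mul_pow_eq_sum_gegenbauer hlam (n - 2 * k) x]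
  simp only [hm, ← add_sub_assoc, sub_sub, ← mul_add, Nat.sub_sub]
  field_simp

/-- connection formula expressing a Gegenbauer polynomial of
weight `ℓ` in terms of Gegenbauer polynomials of weight `λ`:
`C_n^{(ℓ)}(x) = Σ_{k=0}^{⌊n/2⌋} (-1)^k (Γ(ℓ+n-k) Γ(λ) / (k! Γ(ℓ)))
  Σ_{j=0}^{⌊(n-2k)/2⌋} (λ+n-2(k+j))/(j! Γ(λ+n-2k+1-j)) C^{(λ)}_{n-2(k+j)}(x)`. -/
theorem gegenbauer_connection_formula (lam ell : ℝ) (hlam : 0 < lam)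
    (hell : 0 < ell) (n : ℕ) (x : ℝ) :
    gegenbauer ell n x =
      ∑ k ∈ Finset.range (n / 2 + 1),
        (-1 : ℝ) ^ k *
          (Real.Gamma (ell + n - k) * Real.Gamma lam /
            ((k.factorial : ℝ) * Real.Gamma ell)) *
          ∑ j ∈ Finset.range ((n - 2 * k) / 2 + 1),
            (lam + n - 2 * (k + j)) /
                ((j.factorial : ℝ) * Real.Gamma (lam + n - 2 * k + 1 - j)) *
              gegenbauer lam (n - 2 * (k + j)) x :=
  gegenbauer_connection_formula_general lam ell hlam n x
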